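/- arXiv:2512.09437 — 4 statements merged into one kernel-verified Lean document; each statement's English description precedes it below -/
import Mathlib

section
/- Let E ↪ H be Hilbert spaces with continuous dense injection, Φ ∈ C²(E, R), and {u_n} ⊂ S_μ = {u ∈ E : |u|_H² = μ} bounded in E with Φ′(u_n) + λ_n (u_n, ·)_H → 0 in E′, where λ_n = −(1/μ) Φ′(u_n)u_n. Suppose: (i) for large n, every subspace W_n ⊂ E on which Φ″(u_n)[φ,φ] + λ_n|φ|_H² < −ζ_n‖φ‖² for all nonzero φ (with ζ_n → 0⁺) has dim W_n ≤ 2; (ii) there exist λ ∈ R, a subspace Y ⊂ E with dim Y ≥ 3, and a > 0 such that Φ″(u_n)[φ,φ] + λ|φ|_H² ≤ −a‖φ‖² for all φ ∈ Y and all large n. Then λ_n > λ for all large n. -/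
open Filter Topology
open scoped RealInnerProductSpace

/-- Lemma 2.5: lower bound on almost-Lagrange multipliers from approximate Morse
index at most 2 against a 3-dimensional test subspace. -/
theorem stmt6 {E H : Type*}
    [NormedAddCommGroup E] [InnerProductSpace ℝ E] [CompleteSpace E]
    [NormedAddCommGroup H] [InnerProductSpace ℝ H] [CompleteSpace H]
    (ι : E →L[ℝ] H) (hι : Function.Injective ι) (hdense : DenseRange ι) (hnorm : ‖ι‖ ≤ 1)
    (Φ : E → ℝ) (hΦ : ContDiff ℝ 2 Φ) (μ : ℝ) (hμ : 0 < μ)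
    (u : ℕ → E) (hS : ∀ n, ‖ι (u n)‖ ^ 2 = μ)
    (M0 : ℝ) (hbdd : ∀ n, ‖u n‖ ≤ M0)
    (lam : ℕ → ℝ) (hlam : ∀ n, lam n = -(1/μ) * fderiv ℝ Φ (u n) (u n))
    (hPS : Tendsto (fun n => ‖fderiv ℝ Φ (u n) + lam n • ((innerSL ℝ (ι (u n))).comp ι)‖)
      atTop (nhds 0))
    (ζ : ℕ → ℝ) (hζpos : ∀ n, 0 < ζ n) (hζ : Tendsto ζ atTop (nhds 0))
    (h1 : ∀ᶠ n in atTop, ∀ W : Submodule ℝ E,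
      (∀ φ ∈ W, φ ≠ 0 →
        iteratedFDeriv ℝ 2 Φ (u n) ![φ, φ] + lam n * ‖ι φ‖ ^ 2 < -(ζ n) * ‖φ‖ ^ 2) →
      Module.rank ℝ W ≤ 2)
    (lam0 a : ℝ) (ha : 0 < a) (Y : Submodule ℝ E) (hY : 3 ≤ Module.rank ℝ Y)
    (h2 : ∀ᶠ n in atTop, ∀ φ ∈ Y,
      iteratedFDeriv ℝ 2 Φ (u n) ![φ, φ] + lam0 * ‖ι φ‖ ^ 2 ≤ -a * ‖φ‖ ^ 2) :
    ∀ᶠ n in atTop, lam0 < lam n := by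
  have hz : ∀ᶠ n in atTop, ζ n < a := hζ.eventually_lt_const ha
  filter_upwards [h1, h2, hz] with n h1n h2n hzn
  by_contra hle
  push_neg at hle
  have hW := h1n Y (fun φ hφ hφ0 => by
    have h2' := h2n φ hφ
    have hs : 0 ≤ ‖ι φ‖ ^ 2 := sq_nonneg _
    have ht : 0 < ‖φ‖ ^ 2 := pow_pos (norm_pos_iff.mpr hφ0) 2
    nlinarith [mul_le_mul_of_nonneg_right hle hs])
  exact absurd (hY.trans hW) (by norm_num)
end

section
/- Let E ↪ H be Hilbert spaces as above, S a dense subspace of E, Φ ∈ C²(E,R) such that for all w ∈ S the maps u ↦ Φ′(u)(w) and u ↦ Φ″(u)[w,w] are weakly sequentially continuous, and these derivatives pass to limits uniformly on bounded sets along dense approximations. Let {u_n} ⊂ S_μ be bounded with Φ′(u_n) + λ_n(u_n,·)_H → 0 in E′ (λ_n = −(1/|u_n|²)Φ′(u_n)u_n), u_n ⇀ u ≠ 0 in E, and suppose there exist ζ_n → 0⁺ with approximate Morse index m̃_{ζ_n}(u_n) ≤ M. Then the Morse index of u as a constrained critical point satisfies m̃_0(u) ≤ M, i.e., every subspace W ⊂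 T_u S_{|u|²} on which D²Φ(u) is negative definite has dim W ≤ M. -/
/-!
Suppose `W` is tangent at `u₀` with `D²Φ(u₀)` negative definite on it and `dim W > M`, and pick
`W₀ ⊆ W` of dimension `M + 1`. Density of `S` together with the uniform approximation hypotheses
upgrades the weak continuity of `Φ'` and `Φ''` from directions in `S` to all directions; with the
Palais–Smale condition this gives `λₙ → λ`, hence pointwise convergence of the quadratic forms
`D²Φ(uₙ) + ζₙ‖·‖²` to `D²Φ(u₀)`, and Banach–Steinhaus (after polarization) bounds them uniformly.
Bounded and pointwise convergent means continuously convergent, so by compactness of the unit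
sphere of `W₀`, for large `n` the projection of `W₀` onto `T_{uₙ}S_μ` along `uₙ` is an
`(M + 1)`-dimensional subspace on which `D²Φ(uₙ) < -ζₙ`, contradicting `m̃_{ζₙ}(uₙ) ≤ M`.
-/

open Filter Topology
open scoped RealInnerProductSpace

theorem tendsto_apply_of_dense_of_tendstoUniformlyOn {X E : Type*} [TopologicalSpace E]
    [FrechetUrysohnSpace E] {S : Set E} (hS : Dense S) {s : Set X} {g : X → E → ℝ}
    {x : ℕ → X} {x₀ : X} (hx : ∀ n, x n ∈ s) (hg : Continuous (g x₀))
    (hpt : ∀ w ∈ S, Tendsto (fun n => g (x n) w) atTop (𝓝 (g x₀ w)))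
    (hunif : ∀ w (ws : ℕ → E), (∀ m, ws m ∈ S) → Tendsto ws atTop (𝓝 w) →
      TendstoUniformlyOn (fun m v => g v (ws m)) (fun v => g v w) atTop s)
    (w : E) : Tendsto (fun n => g (x n) w) atTop (𝓝 (g x₀ w)) := by
  obtain ⟨ws, hwsS, hws⟩ := mem_closure_iff_seq_limit.1 (hS w)
  have hunif' := (hunif w ws hwsS hws).comp x
  rw [Set.preimage_eq_univ_iff.2 (Set.range_subset_iff.2 hx), tendstoUniformlyOn_univ] at hunif'
  exact hunif'.tendsto_of_eventually_tendsto (.of_forall fun m => hpt _ (hwsS m))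
    ((hg.tendsto w).comp hws)

section NormedSpace

variable {E : Type*} [NormedAddCommGroup E] [NormedSpace ℝ E]

theorem tendsto_of_tendsto_norm_add_smul {f g : ℕ → E →L[ℝ] ℝ} {c : ℕ → ℝ}
    (h : Tendsto (fun n => ‖f n + c n • g n‖) atTop (𝓝 0)) {x : E} {a b : ℝ}
    (hf : Tendsto (fun n => f n x) atTop (𝓝 a)) (hg : Tendsto (fun n => g n x) atTop (𝓝 b))
    (hb : b ≠ 0) : Tendsto c atTop (𝓝 (-a / b)) := by
  have hsum : Tendsto (fun n => (f n + c n • g n) x) atTop (𝓝 0) :=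
    squeeze_zero_norm (fun n => (f n + c n • g n).le_opNorm x) (by simpa using h.mul_const ‖x‖)
  have hcg : Tendsto (fun n => c n * g n x) atTop (𝓝 (-a)) := by
    simpa using hsum.sub hf
  refine (hcg.div hg hb).congr' ?_
  filter_upwards [hg.eventually_ne hb] with n hn
  exact mul_div_cancel_right₀ (c n) hn

theorem ContinuousLinearMap.exists_norm_le_of_tendsto_apply_self [CompleteSpace E]
    {B : ℕ → E →L[ℝ] E →L[ℝ] ℝ} (hB : ∀ n x y, B n x y = B n y x) {q : E → ℝ}
    (hq : ∀ x, Tendsto (fun n => B n x x) atTop (𝓝 (q x))) : ∃ C, ∀ n, ‖B n‖ ≤ C := by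
  have hbdd : ∀ x, ∃ C, ∀ n, |B n x x| ≤ C := fun x => by
    obtain ⟨C, hC⟩ := isBounded_iff_forall_norm_le.1 (Metric.isBounded_range_of_tendsto _ (hq x))
    exact ⟨C, fun n => hC _ (Set.mem_range_self n)⟩
  refine banach_steinhaus fun x => banach_steinhaus fun y => ?_
  obtain ⟨C₁, h₁⟩ := hbdd (x + y)
  obtain ⟨C₂, h₂⟩ := hbdd x
  obtain ⟨C₃, h₃⟩ := hbdd y
  refine ⟨(C₁ + C₂ + C₃) / 2, fun n => ?_⟩
  have hpolar : 2 * B n x y = B n (x + y) (x + y) - B n x x - B n y y := by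
    simp only [map_add, add_apply, hB n y x]
    ring
  rw [Real.norm_eq_abs, abs_le]
  have := abs_le.1 (h₁ n)
  have := abs_le.1 (h₂ n)
  have := abs_le.1 (h₃ n)
  constructor <;> linarith

theorem tendsto_apply_of_norm_le {α F : Type*} [NormedAddCommGroup F] [NormedSpace ℝ F]
    {l : Filter α} {T : α → E →L[ℝ] F} {C : ℝ} (hT : ∀ i, ‖T i‖ ≤ C) {x : α → E} {v : E}
    (hx : Tendsto x l (𝓝 v)) {y : F} (hv : Tendsto (fun i => T i v) l (𝓝 y)) :
    Tendsto (fun i => T i (x i)) l (𝓝 y) := by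
  have hsmall : Tendsto (fun i => T i (x i - v)) l (𝓝 0) := by
    refine squeeze_zero_norm (fun i => ((T i).le_opNorm _).trans
      (mul_le_mul_of_nonneg_right (hT i) (norm_nonneg _))) ?_
    simpa using (tendsto_iff_norm_sub_tendsto_zero.1 hx).const_mul C
  simpa using hsmall.add hv

theorem tendsto_apply_apply_of_norm_le {α : Type*} {l : Filter α}
    {B : α → E →L[ℝ] E →L[ℝ] ℝ} {C : ℝ} (hB : ∀ i, ‖B i‖ ≤ C) {x : α → E} {v : E}
    (hx : Tendsto x l (𝓝 v)) {b : ℝ} (hv : Tendsto (fun i => B i v v) l (𝓝 b)) :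
    Tendsto (fun i => B i (x i) (x i)) l (𝓝 b) := by
  have hleft : Tendsto (fun i => B i (x i) v) l (𝓝 b) :=
    tendsto_apply_of_norm_le (T := fun i => (B i).flip v)
      (fun i => ((B i).flip.le_opNorm v).trans
        (mul_le_mul_of_nonneg_right ((B i).opNorm_flip.trans_le (hB i)) (norm_nonneg v))) hx hv
  have hright : Tendsto (fun i => B i (x i) (x i - v)) l (𝓝 0) := by
    refine squeeze_zero_norm (fun i => ((B i).le_opNorm₂ _ _).trans
      (mul_le_mul_of_nonneg_right (mul_le_mul_of_nonneg_right (hB i) (norm_nonneg _))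
        (norm_nonneg _))) ?_
    simpa using (hx.norm.const_mul C).mul (tendsto_iff_norm_sub_tendsto_zero.1 hx)
  simpa using hright.add hleft

theorem eventually_apply_apply_lt_zero {W : Submodule ℝ E} [FiniteDimensional ℝ W]
    {G : ℕ → E →L[ℝ] E →L[ℝ] ℝ} {G₀ : E →L[ℝ] E →L[ℝ] ℝ} {C : ℝ} (hG : ∀ n, ‖G n‖ ≤ C)
    (hGW : ∀ v ∈ W, Tendsto (fun n => G n v v) atTop (𝓝 (G₀ v v)))
    (hG₀ : ∀ v ∈ W, v ≠ 0 → G₀ v v < 0)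
    {P : ℕ → E →L[ℝ] E} {D : ℝ} (hP : ∀ n, ‖P n‖ ≤ D)
    (hPW : ∀ v ∈ W, Tendsto (fun n => P n v) atTop (𝓝 v)) :
    ∀ᶠ n in atTop, ∀ v ∈ W, v ≠ 0 → G n (P n v) (P n v) < 0 := by
  set K : Set E := (↑) '' Metric.sphere (0 : W) 1
  have hK : IsCompact K := (isCompact_sphere 0 1).image continuous_subtype_val
  have hKW : ∀ v ∈ K, v ∈ W ∧ v ≠ 0 := by
    rintro _ ⟨w, hw, rfl⟩
    refine ⟨w.2, fun h => ?_⟩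
    simp_all
  suffices h : ∀ᶠ n in atTop, ∀ v ∈ K, G n (P n v) (P n v) < 0 by
    filter_upwards [h] with n hn v hv hv0
    have hvK : ‖v‖⁻¹ • v ∈ K :=
      ⟨⟨‖v‖⁻¹ • v, W.smul_mem _ hv⟩, by simp [norm_smul, hv0], rfl⟩
    have hscaled := hn _ hvK
    simp only [map_smul, smul_apply, smul_eq_mul] at hscaled
    have hpos : 0 < ‖v‖⁻¹ := by positivity
    exact neg_of_mul_neg_right (neg_of_mul_neg_right hscaled hpos.le) hpos.le
  -- Counterexamples on the unit sphere subconverge to some `v₀`, and continuous convergence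
  -- then forces `0 ≤ G₀ v₀ v₀`.
  by_contra h
  have hfreq : ∃ᶠ n in atTop, ∃ v ∈ K, 0 ≤ G n (P n v) (P n v) :=
    (not_eventually.1 h).mono fun n hn => by simpa using hn
  obtain ⟨φ, hφ, hφK⟩ := extraction_of_frequently_atTop hfreq
  choose v hvK hv using hφK
  obtain ⟨v₀, hv₀K, ψ, hψ, hvψ⟩ := hK.tendsto_subseq hvK
  have hσ : Tendsto (φ ∘ ψ) atTop atTop := (hφ.comp hψ).tendsto_atTop
  have hPv : Tendsto (fun k => P (φ (ψ k)) (v (ψ k))) atTop (𝓝 v₀) :=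
    tendsto_apply_of_norm_le (fun k => hP _) hvψ ((hPW v₀ (hKW v₀ hv₀K).1).comp hσ)
  have hGv := tendsto_apply_apply_of_norm_le (fun k => hG _) hPv
    ((hGW v₀ (hKW v₀ hv₀K).1).comp hσ)
  exact (hG₀ v₀ (hKW v₀ hv₀K).1 (hKW v₀ hv₀K).2).not_ge (ge_of_tendsto' hGv fun k => hv (ψ k))

end NormedSpace

universe u

theorem Submodule.exists_le_rank_eq {K V : Type*} [Field K] [AddCommGroup V] [Module K V]
    {W : Submodule K V} {n : ℕ} (h : n ≤ Module.rank K W) :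
    ∃ W₀ ≤ W, FiniteDimensional K W₀ ∧ Module.rank K W₀ = n := by
  obtain ⟨f, hf⟩ := exists_linearIndependent_of_le_rank h
  have hfV := hf.map' W.subtype W.ker_subtype
  have hfin := FiniteDimensional.span_of_finite K (Set.finite_range (W.subtype ∘ f))
  refine ⟨_, span_le.2 ?_, hfin, ?_⟩
  · rintro _ ⟨i, rfl⟩
    exact (f i).2
  · rw [← Module.finrank_eq_rank, finrank_span_eq_card hfV, Fintype.card_fin]

theorem Submodule.rank_map_of_ne_zero {K : Type*} {V V' : Type u} [Field K]
    [AddCommGroup V] [Module K V] [AddCommGroup V'] [Module K V'] {f : V →ₗ[K] V'} {W : Submodule K V}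
    (hf : ∀ v ∈ W, v ≠ 0 → f v ≠ 0) : Module.rank K (W.map f) = Module.rank K W := by
  rw [← LinearMap.range_domRestrict]
  refine rank_range_of_injective _ ((injective_iff_map_eq_zero _).2 fun v hv => ?_)
  by_contra hv0
  exact hf v v.2 (by simpa using hv0) hv

section Constraint

variable {E H : Type*} [NormedAddCommGroup E] [InnerProductSpace ℝ E]
  [NormedAddCommGroup H] [InnerProductSpace ℝ H] (ι : E →L[ℝ] H)

noncomputable def pullbackInner : E →L[ℝ] E →L[ℝ] ℝ := (innerSL ℝ).bilinearComp ι ι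

@[simp] theorem pullbackInner_apply (v w : E) : pullbackInner ι v w = ⟪ι v, ι w⟫ := rfl

noncomputable def tangentProj (u : E) : E →L[ℝ] E :=
  ContinuousLinearMap.id ℝ E - (‖ι u‖⁻¹ ^ 2 • pullbackInner ι u).smulRight u

theorem tangentProj_apply (u v : E) :
    tangentProj ι u v = v - (⟪ι u, ι v⟫ / ‖ι u‖ ^ 2) • u := by
  simp [tangentProj, div_eq_inv_mul]

theorem inner_tangentProj {u : E} (hu : ι u ≠ 0) (v : E) : ⟪ι u, ι (tangentProj ι u v)⟫ = 0 := by
  rw [tangentProj_apply, map_sub, map_smul, inner_sub_right, real_inner_smul_right,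
    real_inner_self_eq_norm_sq, div_mul_cancel₀ _ (by positivity), sub_self]

theorem norm_tangentProj_le (u : E) :
    ‖tangentProj ι u‖ ≤ 1 + ‖ι u‖⁻¹ ^ 2 * ‖pullbackInner ι‖ * ‖u‖ ^ 2 := by
  calc ‖tangentProj ι u‖
      ≤ ‖ContinuousLinearMap.id ℝ E‖ + ‖(‖ι u‖⁻¹ ^ 2 • pullbackInner ι u).smulRight u‖ :=
        norm_sub_le _ _
    _ ≤ 1 + ‖ι u‖⁻¹ ^ 2 * (‖pullbackInner ι‖ * ‖u‖) * ‖u‖ := by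
        rw [ContinuousLinearMap.norm_smulRight_apply, norm_smul, norm_pow, norm_inv, norm_norm]
        gcongr
        · exact ContinuousLinearMap.norm_id_le
        · exact (pullbackInner ι).le_opNorm u
    _ = 1 + ‖ι u‖⁻¹ ^ 2 * ‖pullbackInner ι‖ * ‖u‖ ^ 2 := by ring

theorem tendsto_tangentProj_apply {u : ℕ → E} {μ R : ℝ} (hμ : ∀ n, ‖ι (u n)‖ ^ 2 = μ)
    (hu : ∀ n, ‖u n‖ ≤ R) {v : E} (hv : Tendsto (fun n => ⟪ι (u n), ι v⟫) atTop (𝓝 0)) :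
    Tendsto (fun n => tangentProj ι (u n) v) atTop (𝓝 v) := by
  have hcoeff : Tendsto (fun n => ⟪ι (u n), ι v⟫ / μ) atTop (𝓝 0) := by
    simpa using hv.div_const μ
  have hsmall := hcoeff.zero_smul_isBoundedUnder_le (isBoundedUnder_of ⟨R, fun n => hu n⟩)
  simpa [tangentProj_apply, hμ] using tendsto_const_nhds.sub hsmall

noncomputable def lagrangianHessian (Φ : E → ℝ) (x : E) (l : ℝ) : E →L[ℝ] E →L[ℝ] ℝ :=
  fderiv ℝ (fderiv ℝ Φ) x + l • pullbackInner ι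

theorem lagrangianHessian_apply_self (Φ : E → ℝ) (x : E) (l : ℝ) (v : E) :
    lagrangianHessian ι Φ x l v v = iteratedFDeriv ℝ 2 Φ x ![v, v] + l * ‖ι v‖ ^ 2 := by
  simp [lagrangianHessian, iteratedFDeriv_two_apply]

theorem lagrangianHessian_comm {Φ : E → ℝ} (hΦ : ContDiff ℝ 2 Φ) (x : E) (l : ℝ) (v w : E) :
    lagrangianHessian ι Φ x l v w = lagrangianHessian ι Φ x l w v := by
  simp [lagrangianHessian, hΦ.contDiffAt.isSymmSndFDerivAt (by simp) v w, real_inner_comm]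

def IsNegativeTangentSubspace (u : E) (B : E →L[ℝ] E →L[ℝ] ℝ) (W : Submodule ℝ E) : Prop :=
  (∀ φ ∈ W, ⟪ι u, ι φ⟫ = 0) ∧ ∀ φ ∈ W, φ ≠ 0 → B φ φ < 0

variable {ι} in
theorem IsNegativeTangentSubspace.rank_le_of_tendsto {u : ℕ → E} {u₀ : E} {μ R : ℝ}
    (hμ : 0 < μ) (hS : ∀ n, ‖ι (u n)‖ ^ 2 = μ) (hu : ∀ n, ‖u n‖ ≤ R)
    (hweak : ∀ w, Tendsto (fun n => ⟪ι (u n), ι w⟫) atTop (𝓝 ⟪ι u₀, ι w⟫))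
    {G : ℕ → E →L[ℝ] E →L[ℝ] ℝ} {G₀ : E →L[ℝ] E →L[ℝ] ℝ} {C : ℝ} (hG : ∀ n, ‖G n‖ ≤ C)
    (hGv : ∀ v, Tendsto (fun n => G n v v) atTop (𝓝 (G₀ v v))) {M : ℕ}
    (hMorse : ∀ n W, IsNegativeTangentSubspace ι (u n) (G n) W → Module.rank ℝ W ≤ M)
    {W : Submodule ℝ E} (hW : IsNegativeTangentSubspace ι u₀ G₀ W) : Module.rank ℝ W ≤ M := by
  obtain ⟨hWtan, hWneg⟩ := hW
  by_contra hrank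
  obtain ⟨W₀, hW₀W, _, hW₀rank⟩ := Submodule.exists_le_rank_eq (n := M + 1)
    (by exact_mod_cast Cardinal.natCast_add_one_le_iff.2 (not_le.1 hrank))
  have hP : ∀ n, ‖tangentProj ι (u n)‖ ≤ 1 + μ⁻¹ * ‖pullbackInner ι‖ * R ^ 2 := fun n => by
    refine (norm_tangentProj_le ι (u n)).trans ?_
    rw [inv_pow, hS n]
    gcongr
    exact hu n
  have hPW : ∀ v ∈ W₀, Tendsto (fun n => tangentProj ι (u n) v) atTop (𝓝 v) := fun v hv =>
    tendsto_tangentProj_apply ι hS hu (by simpa [hWtan v (hW₀W hv)] using hweak v)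
  obtain ⟨n, hn⟩ := (eventually_apply_apply_lt_zero hG (fun v _ => hGv v)
    (fun v hv => hWneg v (hW₀W hv)) hP hPW).exists
  have hιu : ι (u n) ≠ 0 := fun h => hμ.ne (by simpa [h] using hS n)
  have hW₁ :
      IsNegativeTangentSubspace ι (u n) (G n) (W₀.map (tangentProj ι (u n)).toLinearMap) := by
    refine ⟨?_, ?_⟩
    · rintro _ ⟨v, -, rfl⟩
      exact inner_tangentProj ι hιu v
    · rintro _ ⟨v, hv, rfl⟩ hv0
      exact hn v hv fun h => hv0 (by rw [h, map_zero])
  have hrank₁ := hMorse n _ hW₁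
  rw [Submodule.rank_map_of_ne_zero (fun v hv hv0 h => (hn v hv hv0).ne
    (by rw [ContinuousLinearMap.coe_coe] at h; simp [h])), hW₀rank] at hrank₁
  exact absurd hrank₁ (by exact_mod_cast Nat.not_succ_le_self M)

end Constraint

theorem stmt7_general {E H : Type*}
    [NormedAddCommGroup E] [InnerProductSpace ℝ E] [CompleteSpace E]
    [NormedAddCommGroup H] [InnerProductSpace ℝ H]
    (ι : E →L[ℝ] H) (hι : Function.Injective ι)
    (S : Submodule ℝ E) (hSdense : Dense (S : Set E))
    (Φ : E → ℝ) (hΦ : ContDiff ℝ 2 Φ)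
    -- weak sequential continuity of Φ'(·)(w) and Φ''(·)[w,w] for w ∈ S
    (hC1 : ∀ w ∈ S, ∀ (v : ℕ → E) (v0 : E),
      (∀ f : E →L[ℝ] ℝ, Tendsto (fun n => f (v n)) atTop (nhds (f v0))) →
      Tendsto (fun n => fderiv ℝ Φ (v n) w) atTop (nhds (fderiv ℝ Φ v0 w)))
    (hC2 : ∀ w ∈ S, ∀ (v : ℕ → E) (v0 : E),
      (∀ f : E →L[ℝ] ℝ, Tendsto (fun n => f (v n)) atTop (nhds (f v0))) →
      Tendsto (fun n => iteratedFDeriv ℝ 2 Φ (v n) ![w, w]) atTop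
        (nhds (iteratedFDeriv ℝ 2 Φ v0 ![w, w])))
    -- uniform convergence on bounded sets along dense approximations
    (hU1 : ∀ (w : E) (ws : ℕ → E), (∀ m, ws m ∈ S) → Tendsto ws atTop (nhds w) →
      ∀ R > (0:ℝ), TendstoUniformlyOn (fun m v => fderiv ℝ Φ v (ws m))
        (fun v => fderiv ℝ Φ v w) atTop {v : E | ‖v‖ ≤ R})
    (hU2 : ∀ (w : E) (ws : ℕ → E), (∀ m, ws m ∈ S) → Tendsto ws atTop (nhds w) →
      ∀ R > (0:ℝ), TendstoUniformlyOn (fun m v => iteratedFDeriv ℝ 2 Φ v ![ws m, ws m])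
        (fun v => iteratedFDeriv ℝ 2 Φ v ![w, w]) atTop {v : E | ‖v‖ ≤ R})
    (μ : ℝ) (hμ : 0 < μ) (u : ℕ → E) (hS : ∀ n, ‖ι (u n)‖ ^ 2 = μ)
    (M0 : ℝ) (hbdd : ∀ n, ‖u n‖ ≤ M0)
    (lam : ℕ → ℝ)
    (hPS : Tendsto (fun n => ‖fderiv ℝ Φ (u n) + lam n • ((innerSL ℝ (ι (u n))).comp ι)‖)
      atTop (nhds 0))
    (u0 : E) (hu0 : u0 ≠ 0)
    (hweak : ∀ f : E →L[ℝ] ℝ, Tendsto (fun n => f (u n)) atTop (nhds (f u0)))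
    (ζ : ℕ → ℝ) (hζ : Tendsto ζ atTop (nhds 0))
    (M : ℕ)
    (hMorse : ∀ n, ∀ W : Submodule ℝ E,
      (∀ φ ∈ W, ⟪ι (u n), ι φ⟫ = 0) →
      (∀ φ ∈ W, φ ≠ 0 →
        iteratedFDeriv ℝ 2 Φ (u n) ![φ, φ] + lam n * ‖ι φ‖ ^ 2 < -(ζ n) * ‖φ‖ ^ 2) →
      Module.rank ℝ W ≤ M) :
    ∀ W : Submodule ℝ E,
      (∀ φ ∈ W, ⟪ι u0, ι φ⟫ = 0) →
      (∀ φ ∈ W, φ ≠ 0 →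
        iteratedFDeriv ℝ 2 Φ u0 ![φ, φ]
          - (fderiv ℝ Φ u0 u0 / ‖ι u0‖ ^ 2) * ⟪ι φ, ι φ⟫ < 0) →
      Module.rank ℝ W ≤ M := by
  intro W hWtan hWneg
  have hR : ∀ n, u n ∈ {v : E | ‖v‖ ≤ max M0 1} := fun n => (hbdd n).trans (le_max_left _ _)
  have hD1 : ∀ w, Tendsto (fun n => fderiv ℝ Φ (u n) w) atTop (𝓝 (fderiv ℝ Φ u0 w)) :=
    tendsto_apply_of_dense_of_tendstoUniformlyOn (g := fun v w => fderiv ℝ Φ v w) hSdense hR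
      (fderiv ℝ Φ u0).continuous
      (fun w hw => hC1 w hw u u0 hweak) fun w ws hws hlim => hU1 w ws hws hlim _ (by positivity)
  have hD2 : ∀ w, Tendsto (fun n => iteratedFDeriv ℝ 2 Φ (u n) ![w, w]) atTop
      (𝓝 (iteratedFDeriv ℝ 2 Φ u0 ![w, w])) :=
    tendsto_apply_of_dense_of_tendstoUniformlyOn (g := fun v w => iteratedFDeriv ℝ 2 Φ v ![w, w])
      hSdense hR (by fun_prop) (fun w hw => hC2 w hw u u0 hweak)
      fun w ws hws hlim => hU2 w ws hws hlim _ (by positivity)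
  have hιweak : ∀ w, Tendsto (fun n => ⟪ι (u n), ι w⟫) atTop (𝓝 ⟪ι u0, ι w⟫) := fun w => by
    simpa [real_inner_comm] using hweak (pullbackInner ι w)
  have hιu0 : ι u0 ≠ 0 := fun h => hu0 (hι (by simpa using h))
  have hlam_lim : Tendsto lam atTop (𝓝 (-fderiv ℝ Φ u0 u0 / ‖ι u0‖ ^ 2)) :=
    tendsto_of_tendsto_norm_add_smul hPS (hD1 u0) (b := ‖ι u0‖ ^ 2)
      (by simpa [real_inner_self_eq_norm_sq] using hιweak u0) (by positivity)
  -- `pullbackInner (.id ℝ E)` is the inner product of `E`: `G n` absorbs the margin `ζ n ‖·‖²`.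
  set G : ℕ → E →L[ℝ] E →L[ℝ] ℝ :=
    fun n => lagrangianHessian ι Φ (u n) (lam n) + ζ n • pullbackInner (.id ℝ E)
  have hG : ∀ n v, G n v v =
      iteratedFDeriv ℝ 2 Φ (u n) ![v, v] + lam n * ‖ι v‖ ^ 2 + ζ n * ‖v‖ ^ 2 := by
    simp [G, lagrangianHessian_apply_self]
  set G₀ := lagrangianHessian ι Φ u0 (-fderiv ℝ Φ u0 u0 / ‖ι u0‖ ^ 2)
  have hGv : ∀ v, Tendsto (fun n => G n v v) atTop (𝓝 (G₀ v v)) := fun v => by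
    simpa [hG, G₀, lagrangianHessian_apply_self] using
      ((hD2 v).add (hlam_lim.mul_const (‖ι v‖ ^ 2))).add (hζ.mul_const (‖v‖ ^ 2))
  obtain ⟨C, hC⟩ := ContinuousLinearMap.exists_norm_le_of_tendsto_apply_self
    (fun n x y => by simp [G, lagrangianHessian_comm ι hΦ (u n) _ x y, real_inner_comm]) hGv
  refine IsNegativeTangentSubspace.rank_le_of_tendsto hμ hS hbdd hιweak hC hGv
    (fun n W' hW' => hMorse n W' hW'.1 fun φ hφ hφ0 => ?_) ⟨hWtan, fun φ hφ hφ0 => ?_⟩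
  · have := hW'.2 φ hφ hφ0
    rw [hG] at this
    linarith
  · have := hWneg φ hφ hφ0
    convert this using 1
    rw [lagrangianHessian_apply_self, real_inner_self_eq_norm_sq]
    ring

/-- Theorem 2.6: the approximate Morse index bound passes to the weak limit:
if `m̃_{ζ_n}(u_n) ≤ M` and `u_n ⇀ u ≠ 0` then `m̃₀(u) ≤ M`. -/
theorem stmt7 {E H : Type*}
    [NormedAddCommGroup E] [InnerProductSpace ℝ E] [CompleteSpace E]
    [NormedAddCommGroup H] [InnerProductSpace ℝ H] [CompleteSpace H]
    (ι : E →L[ℝ] H) (hι : Function.Injective ι) (hdense : DenseRange ι) (hnorm : ‖ι‖ ≤ 1)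
    (S : Submodule ℝ E) (hSdense : Dense (S : Set E))
    (Φ : E → ℝ) (hΦ : ContDiff ℝ 2 Φ)
    -- weak sequential continuity of Φ'(·)(w) and Φ''(·)[w,w] for w ∈ S
    (hC1 : ∀ w ∈ S, ∀ (v : ℕ → E) (v0 : E),
      (∀ f : E →L[ℝ] ℝ, Tendsto (fun n => f (v n)) atTop (nhds (f v0))) →
      Tendsto (fun n => fderiv ℝ Φ (v n) w) atTop (nhds (fderiv ℝ Φ v0 w)))
    (hC2 : ∀ w ∈ S, ∀ (v : ℕ → E) (v0 : E),
      (∀ f : E →L[ℝ] ℝ, Tendsto (fun n => f (v n)) atTop (nhds (f v0))) →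
      Tendsto (fun n => iteratedFDeriv ℝ 2 Φ (v n) ![w, w]) atTop
        (nhds (iteratedFDeriv ℝ 2 Φ v0 ![w, w])))
    -- uniform convergence on bounded sets along dense approximations
    (hU1 : ∀ (w : E) (ws : ℕ → E), (∀ m, ws m ∈ S) → Tendsto ws atTop (nhds w) →
      ∀ R > (0:ℝ), TendstoUniformlyOn (fun m v => fderiv ℝ Φ v (ws m))
        (fun v => fderiv ℝ Φ v w) atTop {v : E | ‖v‖ ≤ R})
    (hU2 : ∀ (w : E) (ws : ℕ → E), (∀ m, ws m ∈ S) → Tendsto ws atTop (nhds w) →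
      ∀ R > (0:ℝ), TendstoUniformlyOn (fun m v => iteratedFDeriv ℝ 2 Φ v ![ws m, ws m])
        (fun v => iteratedFDeriv ℝ 2 Φ v ![w, w]) atTop {v : E | ‖v‖ ≤ R})
    (μ : ℝ) (hμ : 0 < μ) (u : ℕ → E) (hS : ∀ n, ‖ι (u n)‖ ^ 2 = μ)
    (M0 : ℝ) (hbdd : ∀ n, ‖u n‖ ≤ M0)
    (lam : ℕ → ℝ) (hlam : ∀ n, lam n = -(1 / ‖ι (u n)‖ ^ 2) * fderiv ℝ Φ (u n) (u n))
    (hPS : Tendsto (fun n => ‖fderiv ℝ Φ (u n) + lam n • ((innerSL ℝ (ι (u n))).comp ι)‖)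
      atTop (nhds 0))
    (u0 : E) (hu0 : u0 ≠ 0)
    (hweak : ∀ f : E →L[ℝ] ℝ, Tendsto (fun n => f (u n)) atTop (nhds (f u0)))
    (ζ : ℕ → ℝ) (hζpos : ∀ n, 0 < ζ n) (hζ : Tendsto ζ atTop (nhds 0))
    (M : ℕ)
    (hMorse : ∀ n, ∀ W : Submodule ℝ E,
      (∀ φ ∈ W, ⟪ι (u n), ι φ⟫ = 0) →
      (∀ φ ∈ W, φ ≠ 0 →
        iteratedFDeriv ℝ 2 Φ (u n) ![φ, φ] + lam n * ‖ι φ‖ ^ 2 < -(ζ n) * ‖φ‖ ^ 2) →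
      Module.rank ℝ W ≤ M) :
    ∀ W : Submodule ℝ E,
      (∀ φ ∈ W, ⟪ι u0, ι φ⟫ = 0) →
      (∀ φ ∈ W, φ ≠ 0 →
        iteratedFDeriv ℝ 2 Φ u0 ![φ, φ]
          - (fderiv ℝ Φ u0 u0 / ‖ι u0‖ ^ 2) * ⟪ι φ, ι φ⟫ < 0) →
      Module.rank ℝ W ≤ M :=
  stmt7_general ι hι S hSdense Φ hΦ hC1 hC2 hU1 hU2 μ hμ u hS M0 hbdd lam hPS u0 hu0 hweak ζ hζ M
    hMorse
end

section
/- Let E ↪ H be Hilbert spaces, Φ = A − B a C² functional on E with: (A) there is α₁ > 0 with 0 ≤ A(u) ≤ α₁ A′(u)u for all u, and u ↦ A′(u)u weakly lower semicontinuous; (B) B ≥ 0 and u ↦ B′(u)u weakly sequentially continuous. Suppose {u_n} ⊂ E is bounded, {λ_n} ⊂ [0,∞) is bounded, c := lim Φ(u_n) > 0, and Φ′(u_n) + λ_n(u_n,·)_H → 0 in E′. Then the weak limit u of (a subsequence of) {u_n} is nonzero. -/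
open Filter Topology
open scoped RealInnerProductSpace

/-- Theorem 2.7: nonvanishing of weak limits of bounded Palais–Smale sequences
with nonnegative bounded multipliers at positive energy, for `Φ = A - B`. -/
theorem stmt8 {E H : Type*}
    [NormedAddCommGroup E] [InnerProductSpace ℝ E] [CompleteSpace E]
    [NormedAddCommGroup H] [InnerProductSpace ℝ H] [CompleteSpace H]
    (ι : E →L[ℝ] H) (hι : Function.Injective ι) (hdense : DenseRange ι)
    (A B : E → ℝ) (hA : ContDiff ℝ 2 A) (hB : ContDiff ℝ 2 B)
    (α1 : ℝ) (hα1 : 0 < α1)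
    (hA1 : ∀ v : E, 0 ≤ A v ∧ A v ≤ α1 * fderiv ℝ A v v)
    (hAlsc : ∀ (v : ℕ → E) (w : E),
      (∀ f : E →L[ℝ] ℝ, Tendsto (fun n => f (v n)) atTop (nhds (f w))) →
      fderiv ℝ A w w ≤ liminf (fun n => fderiv ℝ A (v n) (v n)) atTop)
    (hBpos : ∀ v : E, 0 ≤ B v)
    (hBwc : ∀ (v : ℕ → E) (w : E),
      (∀ f : E →L[ℝ] ℝ, Tendsto (fun n => f (v n)) atTop (nhds (f w))) →
      Tendsto (fun n => fderiv ℝ B (v n) (v n)) atTop (nhds (fderiv ℝ B w w)))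
    (u : ℕ → E) (M0 : ℝ) (hbdd : ∀ n, ‖u n‖ ≤ M0)
    (lam : ℕ → ℝ) (hlamnn : ∀ n, 0 ≤ lam n) (L : ℝ) (hlamb : ∀ n, lam n ≤ L)
    (c : ℝ) (hc : 0 < c)
    (hΦc : Tendsto (fun n => A (u n) - B (u n)) atTop (nhds c))
    (hPS : Tendsto (fun n =>
      ‖fderiv ℝ A (u n) - fderiv ℝ B (u n) + lam n • ((innerSL ℝ (ι (u n))).comp ι)‖)
      atTop (nhds 0))
    (σ : ℕ → ℕ) (hσ : StrictMono σ) (u0 : E)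
    (hweak : ∀ f : E →L[ℝ] ℝ, Tendsto (fun k => f (u (σ k))) atTop (nhds (f u0))) :
    u0 ≠ 0 := by

  intro h0
  -- notation for the PS functionals
  set g : ℕ → E →L[ℝ] ℝ := fun n =>
    fderiv ℝ A (u n) - fderiv ℝ B (u n) + lam n • ((innerSL ℝ (ι (u n))).comp ι) with hg_def
  have hM0 : 0 ≤ M0 := le_trans (norm_nonneg _) (hbdd 0)
  -- g n (u n) → 0
  have hgu : Tendsto (fun n => g n (u n)) atTop (nhds 0) := by
    have hbound : ∀ n, ‖g n (u n)‖ ≤ ‖g n‖ * M0 := fun n =>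
      le_trans ((g n).le_opNorm (u n))
        (mul_le_mul_of_nonneg_left (hbdd n) (norm_nonneg _))
    have hlim : Tendsto (fun n => ‖g n‖ * M0) atTop (nhds 0) := by
      have := hPS.mul_const M0
      simpa using this
    exact squeeze_zero_norm hbound hlim
  -- B'(u (σ k)) (u (σ k)) → 0
  have hB0 : Tendsto (fun k => fderiv ℝ B (u (σ k)) (u (σ k))) atTop (nhds 0) := by
    have := hBwc (fun k => u (σ k)) u0 hweak
    simpa [h0] using this
  -- pointwise estimate
  have hkey : ∀ k, A (u (σ k)) - B (u (σ k)) ≤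
      α1 * (g (σ k) (u (σ k)) + fderiv ℝ B (u (σ k)) (u (σ k))) := by
    intro k
    set n := σ k
    have h1 : A (u n) - B (u n) ≤ A (u n) := by
      have := hBpos (u n); linarith
    have h2 : A (u n) ≤ α1 * fderiv ℝ A (u n) (u n) := (hA1 (u n)).2
    have h3 : fderiv ℝ A (u n) (u n) ≤ g n (u n) + fderiv ℝ B (u n) (u n) := by
      have hgn : g n (u n) = fderiv ℝ A (u n) (u n) - fderiv ℝ B (u n) (u n)
          + lam n * ⟪ι (u n), ι (u n)⟫ := by
        simp [hg_def]
      have hnn : 0 ≤ lam n * ⟪ι (u n), ι (u n)⟫ :=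
        mul_nonneg (hlamnn n) real_inner_self_nonneg
      linarith
    calc A (u n) - B (u n) ≤ A (u n) := h1
      _ ≤ α1 * fderiv ℝ A (u n) (u n) := h2
      _ ≤ α1 * (g n (u n) + fderiv ℝ B (u n) (u n)) :=
          mul_le_mul_of_nonneg_left h3 hα1.le
  -- RHS tends to 0
  have hRHS : Tendsto (fun k => α1 * (g (σ k) (u (σ k)) + fderiv ℝ B (u (σ k)) (u (σ k))))
      atTop (nhds 0) := by
    have h1 : Tendsto (fun k => g (σ k) (u (σ k))) atTop (nhds 0) :=
      hgu.comp hσ.tendsto_atTop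
    have := (h1.add hB0).const_mul α1
    simpa using this
  have hLHS : Tendsto (fun k => A (u (σ k)) - B (u (σ k))) atTop (nhds c) :=
    hΦc.comp hσ.tendsto_atTop
  have : c ≤ 0 := le_of_tendsto_of_tendsto' hLHS hRHS hkey
  linarith
end

section
/- Let Ω ⊂ R^N be an exterior domain, α > 0, p ∈ (2, 2*), and let u_n ∈ C²(Ω) ∩ H_0^1(Ω) be positive solutions of −Δu_n + λ_n u_n = ρ_n |x|^{−α} u_n^{p−1} with λ_n → +∞, ρ_n ∈ [1/2,1]. Suppose there are points P_n^1, …, P_n^k ∈ Ω, constants γ, C > 0, and the pointwise bound u_n(x) ≤ C λ_n^{1/(p−2)} Σ_{i=1}^k exp(−γ λ_n^{1/2} |x − P_n^i|) for all x ∈ Ω and all n. If additionally ∫_Ω u_n² = μ > 0 for all n and N/2 − 2/(p−2) > 0 (i.e., p > 2+4/N), then one reaches a contradiction: indeed λ_n^{N/2 − 2/(p−2)} μ → ∞ while λ_n^{N/2 − 2/(p−2)} ∫_{Ω ∖ ∪_i B_{Rλ_n^{−1/2}}(P_n^i)} u_n² ≤ C′(R) stays bounded and the mass near the k points converges to a finite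 limit. -/
open MeasureTheory Filter Topology Real Set

/-- The Laplacian of `u : ℝ^N → ℝ`, as the trace of the second derivative. -/
noncomputable def lap {N : ℕ} (u : EuclideanSpace ℝ (Fin N) → ℝ) (x : EuclideanSpace ℝ (Fin N)) : ℝ :=
  ∑ i : Fin N, iteratedFDeriv ℝ 2 u x ![EuclideanSpace.single i 1, EuclideanSpace.single i 1]

lemma exp_neg_le_aux {b : ℝ} (hb : 0 < b) (m : ℕ) (hm : 0 < m) {t : ℝ} (ht : 0 ≤ t) :
    Real.exp (-b * t) ≤ (min 1 (b / m))⁻¹ ^ m * (1 + t) ^ (-(m : ℝ)) := by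
  have hc : 0 < min 1 (b / m) := lt_min one_pos (by positivity)
  have h1t : (0:ℝ) < 1 + t := by linarith
  have key : (min 1 (b / m)) ^ m * (1 + t) ^ m ≤ Real.exp (b * t) := by
    have h1 : min 1 (b / m) * (1 + t) ≤ 1 + (b / m) * t := by
      have := min_le_left (1:ℝ) (b / m)
      have h2 := mul_le_mul_of_nonneg_right (min_le_right (1:ℝ) (b / m)) ht
      nlinarith
    have h2 : (min 1 (b / m) * (1 + t)) ^ m ≤ (1 + (b / m) * t) ^ m := by
      apply pow_le_pow_left₀ (by positivity) h1
    have h3 : (1 + (b / m) * t) ^ m ≤ (Real.exp ((b / m) * t)) ^ m := by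
      apply pow_le_pow_left₀ (by positivity)
      linarith [Real.add_one_le_exp ((b / m) * t)]
    have h4 : (Real.exp ((b / m) * t)) ^ m = Real.exp (b * t) := by
      rw [← Real.exp_nat_mul]
      congr 1
      field_simp
    calc (min 1 (b / m)) ^ m * (1 + t) ^ m = (min 1 (b / m) * (1 + t)) ^ m := (mul_pow _ _ _).symm
      _ ≤ (1 + (b / m) * t) ^ m := h2
      _ ≤ (Real.exp ((b / m) * t)) ^ m := h3
      _ = Real.exp (b * t) := h4
  rw [Real.rpow_neg h1t.le, Real.rpow_natCast, neg_mul, Real.exp_neg, inv_pow, ← mul_inv]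
  exact inv_anti₀ (by positivity) key

lemma integrable_exp_neg_mul_norm {N : ℕ} {b : ℝ} (hb : 0 < b) :
    Integrable (fun x : EuclideanSpace ℝ (Fin N) => Real.exp (-b * ‖x‖)) := by
  have hfin : (Module.finrank ℝ (EuclideanSpace ℝ (Fin N)) : ℝ) < ((N + 1 : ℕ) : ℝ) := by
    simp [finrank_euclideanSpace]
  have hint := (integrable_one_add_norm (μ := (volume : Measure (EuclideanSpace ℝ (Fin N)))) hfin).const_mul
      ((min 1 (b / (N + 1 : ℕ)))⁻¹ ^ (N + 1))
  refine hint.mono' ?_ ?_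
  · exact (Real.continuous_exp.comp (continuous_const.mul continuous_norm)).aestronglyMeasurable
  · filter_upwards with x
    rw [Real.norm_eq_abs, abs_of_pos (Real.exp_pos _)]
    exact exp_neg_le_aux hb (N + 1) (Nat.succ_pos N) (norm_nonneg x)

/-- blow-up mass contradiction: positive solutions with `λ_n → ∞`, fixed mass
`μ > 0`, Morse-type exponential concentration around `k` points, and `p > 2 + 4/N`
cannot exist. -/
theorem stmt13 (N k : ℕ) (hN : 3 ≤ N) (hk : 1 ≤ k) (p α μ γ C : ℝ)
    (hp : 2 < p) (hp' : p < 2 * (N : ℝ) / ((N : ℝ) - 2)) (hα : 0 < α) (hμ : 0 < μ)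
    (hγ : 0 < γ) (hC : 0 < C)
    (hsup : 0 < (N : ℝ) / 2 - 2 / (p - 2))
    (Ω : Set (EuclideanSpace ℝ (Fin N))) (hopen : IsOpen Ω) (hext : IsCompact Ωᶜ)
    (u : ℕ → EuclideanSpace ℝ (Fin N) → ℝ) (lam ρ : ℕ → ℝ)
    (hρ : ∀ n, ρ n ∈ Icc (1/2 : ℝ) 1) (hlam : Tendsto lam atTop atTop)
    (hpos : ∀ n, ∀ x ∈ Ω, 0 < u n x) (hsm : ∀ n, ContDiffOn ℝ 2 (u n) Ω)
    (hsupp : ∀ n, ∀ x ∉ Ω, u n x = 0)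
    (heq : ∀ n, ∀ x ∈ Ω,
      -lap (u n) x + lam n * u n x = ρ n * ‖x‖ ^ (-α) * (u n x) ^ (p - 1))
    (P : ℕ → Fin k → EuclideanSpace ℝ (Fin N)) (hP : ∀ n i, P n i ∈ Ω)
    (hbound : ∀ n, ∀ x ∈ Ω, u n x ≤ C * lam n ^ ((1:ℝ) / (p - 2)) *
      ∑ i, Real.exp (-γ * Real.sqrt (lam n) * ‖x - P n i‖))
    (hmass : ∀ n, ∫ x in Ω, (u n x) ^ 2 = μ) :
    False := by
  set e : ℝ := (N : ℝ) / 2 - 2 / (p - 2) with he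
  set I : ℝ := ∫ y : EuclideanSpace ℝ (Fin N), Real.exp (-(2 * γ) * ‖y‖) with hI
  have hInn : 0 ≤ I := integral_nonneg fun y => (Real.exp_pos _).le
  -- eventually the bound beats μ
  have htend : Tendsto (fun n => C ^ 2 * (k : ℝ) ^ 2 * I * lam n ^ (-e)) atTop (𝓝 0) := by
    have h0 : Tendsto (fun l : ℝ => l ^ (-e)) atTop (𝓝 0) := tendsto_rpow_neg_atTop hsup
    have := (h0.comp hlam).const_mul (C ^ 2 * (k : ℝ) ^ 2 * I)
    simpa using this
  have hev : ∀ᶠ n in atTop, C ^ 2 * (k : ℝ) ^ 2 * I * lam n ^ (-e) < μ :=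
    htend.eventually (eventually_lt_nhds hμ) |>.mono (fun n h => by simpa using h)
  have hev1 : ∀ᶠ n in atTop, 1 ≤ lam n := hlam.eventually_ge_atTop 1
  obtain ⟨n, hlt, hl1⟩ := (hev.and hev1).exists
  set l := lam n with hldef
  have hl0 : (0:ℝ) < l := lt_of_lt_of_le one_pos hl1
  set s := Real.sqrt l with hs
  have hs0 : 0 < s := Real.sqrt_pos.2 hl0
  -- the dominating function
  set A : ℝ := C ^ 2 * l ^ ((2:ℝ) / (p - 2)) * k with hA
  have hA0 : 0 ≤ A := by positivity
  have hint1 : ∀ i : Fin k, Integrable (fun x : EuclideanSpace ℝ (Fin N) => Real.exp (-(2 * γ * s) * ‖x - P n i‖)) :=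
    fun i => (integrable_exp_neg_mul_norm (by positivity)).comp_sub_right (P n i)
  have hinth : Integrable (fun x : EuclideanSpace ℝ (Fin N) => A * ∑ i, Real.exp (-(2 * γ * s) * ‖x - P n i‖)) :=
    (integrable_finset_sum _ (fun i _ => hint1 i)).const_mul A
  -- pointwise bound on the dominating squared envelope
  have hg_le : ∀ x : EuclideanSpace ℝ (Fin N),
      (C * l ^ ((1:ℝ) / (p - 2)) * ∑ i, Real.exp (-γ * s * ‖x - P n i‖)) ^ 2
        ≤ A * ∑ i, Real.exp (-(2 * γ * s) * ‖x - P n i‖) := by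
    intro x
    have hsum : (∑ i : Fin k, Real.exp (-γ * s * ‖x - P n i‖)) ^ 2
        ≤ (k : ℝ) * ∑ i, (Real.exp (-γ * s * ‖x - P n i‖)) ^ 2 := by
      simpa using sq_sum_le_card_mul_sum_sq
        (s := (Finset.univ : Finset (Fin k))) (f := fun i => Real.exp (-γ * s * ‖x - P n i‖))
    have hsq : ∀ i : Fin k, (Real.exp (-γ * s * ‖x - P n i‖)) ^ 2
        = Real.exp (-(2 * γ * s) * ‖x - P n i‖) := by
      intro i
      rw [sq, ← Real.exp_add]
      ring_nf
    have hrpow : (l ^ ((1:ℝ) / (p - 2))) ^ 2 = l ^ ((2:ℝ) / (p - 2)) := by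
      rw [sq, ← Real.rpow_add hl0]
      ring_nf
    calc (C * l ^ ((1:ℝ) / (p - 2)) * ∑ i, Real.exp (-γ * s * ‖x - P n i‖)) ^ 2
        = C ^ 2 * (l ^ ((1:ℝ) / (p - 2))) ^ 2 * (∑ i, Real.exp (-γ * s * ‖x - P n i‖)) ^ 2 := by
          ring
      _ ≤ C ^ 2 * (l ^ ((1:ℝ) / (p - 2))) ^ 2 * ((k : ℝ) * ∑ i, (Real.exp (-γ * s * ‖x - P n i‖)) ^ 2) := by
          apply mul_le_mul_of_nonneg_left hsum (by positivity)
      _ = A * ∑ i, Real.exp (-(2 * γ * s) * ‖x - P n i‖) := by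
          rw [hrpow]
          simp_rw [hsq]
          ring
  -- step A: μ ≤ ∫ over Ω of envelope
  have stepA : μ ≤ ∫ x in Ω, A * ∑ i, Real.exp (-(2 * γ * s) * ‖x - P n i‖) := by
    rw [← hmass n]
    apply integral_mono_of_nonneg
    · exact ae_of_all _ fun x => sq_nonneg _
    · exact hinth.restrict
    · refine (ae_restrict_iff' hopen.measurableSet).2 (ae_of_all _ fun x hx => ?_)
      calc (u n x) ^ 2 ≤ (C * l ^ ((1:ℝ) / (p - 2)) * ∑ i, Real.exp (-γ * s * ‖x - P n i‖)) ^ 2 := by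
            apply pow_le_pow_left₀ (hpos n x hx).le
            exact hbound n x hx
        _ ≤ A * ∑ i, Real.exp (-(2 * γ * s) * ‖x - P n i‖) := hg_le x
  -- step B: the set integral is at most the full integral
  have stepB : ∫ x in Ω, A * ∑ i, Real.exp (-(2 * γ * s) * ‖x - P n i‖)
      ≤ ∫ x : EuclideanSpace ℝ (Fin N), A * ∑ i, Real.exp (-(2 * γ * s) * ‖x - P n i‖) := by
    apply setIntegral_le_integral hinth
    exact ae_of_all _ fun x => by positivity
  -- step C: compute the full integral
  have hJ : ∀ i : Fin k, ∫ x : EuclideanSpace ℝ (Fin N), Real.exp (-(2 * γ * s) * ‖x - P n i‖)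
      = (s ^ N)⁻¹ * I := by
    intro i
    rw [integral_sub_right_eq_self (fun x : EuclideanSpace ℝ (Fin N) => Real.exp (-(2 * γ * s) * ‖x‖)) (P n i)]
    have : ∀ x : EuclideanSpace ℝ (Fin N), Real.exp (-(2 * γ * s) * ‖x‖) = Real.exp (-(2 * γ) * ‖s • x‖) := by
      intro x
      rw [norm_smul, Real.norm_eq_abs, abs_of_pos hs0]
      ring_nf
    simp_rw [this]
    rw [Measure.integral_comp_smul_of_nonneg (volume : Measure (EuclideanSpace ℝ (Fin N)))
        (fun y : EuclideanSpace ℝ (Fin N) => Real.exp (-(2 * γ) * ‖y‖)) s (hR := hs0.le)]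
    simp [finrank_euclideanSpace, smul_eq_mul, hI]
  have stepC : ∫ x : EuclideanSpace ℝ (Fin N), A * ∑ i, Real.exp (-(2 * γ * s) * ‖x - P n i‖)
      = A * ((k : ℝ) * ((s ^ N)⁻¹ * I)) := by
    rw [integral_const_mul, integral_finset_sum _ (fun i _ => hint1 i)]
    simp_rw [hJ]
    simp [mul_comm]
  -- combine
  have hfinal : μ ≤ C ^ 2 * (k : ℝ) ^ 2 * I * l ^ (-e) := by
    have h1 : μ ≤ A * ((k : ℝ) * ((s ^ N)⁻¹ * I)) := by
      calc μ ≤ _ := stepA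
        _ ≤ _ := stepB
        _ = _ := stepC
    have hsN : (s ^ N : ℝ)⁻¹ = l ^ (-((N : ℝ) / 2)) := by
      rw [hs, Real.sqrt_eq_rpow, ← Real.rpow_natCast (l ^ ((1:ℝ)/2)) N,
        ← Real.rpow_mul hl0.le, ← Real.rpow_neg hl0.le]
      ring_nf
    have hcomb : l ^ ((2:ℝ) / (p - 2)) * l ^ (-((N : ℝ) / 2)) = l ^ (-e) := by
      rw [← Real.rpow_add hl0]
      congr 1
      rw [he]; ring
    calc μ ≤ A * ((k : ℝ) * ((s ^ N)⁻¹ * I)) := h1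
      _ = C ^ 2 * (k : ℝ) ^ 2 * I * (l ^ ((2:ℝ) / (p - 2)) * l ^ (-((N : ℝ) / 2))) := by
          rw [hA, hsN]; ring
      _ = C ^ 2 * (k : ℝ) ^ 2 * I * l ^ (-e) := by rw [hcomb]
  exact absurd hfinal (not_le.2 hlt)
end
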